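/- Let b ∈ (0, 1/2) be a constant and let w ∈ ℤ with w ≥ 2. Suppose the time-linkage RLS or (1+1) EA on f_w starts from a state (x',x) with x'_1 = 1, x_1 = 0, and |x| ≥ b·n, and set k = |x_{[2..n]}|. Then: (i) for the RLS, Event III holds at the start and the RLS never reaches the global optimum; (ii) for the (1+1) EA, if k ≥ n − w + 1 then Event III holds at the start and the (1+1) EA never reaches the global optimum; (iii) otherwise the (1+1) EA reaches the global optimum before Event III happens with probability at least (1 − 1/n)·e^{−(1−b)e−1}, and moreover the expected number of generations until the (1+1) EA reaches the global optimum is at least (w/((1−b)e))^w. -/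

import Mathlib

open scoped Classical BigOperators ENNReal

noncomputable section

/-- Bitstrings of length `n`. -/
abbrev BitStr (n : ℕ) := Fin n → Bool

/-- The number of one-bits of a bitstring. -/
def ones {n : ℕ} (x : BitStr n) : ℕ := (Finset.univ.filter fun i => x i = true).card

/-- The number of zero-bits of a bitstring. -/
def zeros {n : ℕ} (x : BitStr n) : ℕ := (Finset.univ.filter fun i => x i = false).card

/-- The first bit of a bitstring (`false` if `n = 0`). -/
def firstBit {n : ℕ} (x : BitStr n) : Bool := if h : 0 < n then x ⟨0, h⟩ else false

/-- The number of one-bits among the last `n-1` positions. -/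
def onesTail {n : ℕ} (x : BitStr n) : ℕ :=
  (Finset.univ.filter fun i : Fin n => x i = true ∧ (i : ℕ) ≠ 0).card

/-- The all-ones bitstring `1^n`. -/
def allOnes (n : ℕ) : BitStr n := fun _ => true

/-- The time-linkage OneMax function `f_w(x, y) = |y| + w·x₁`, where `x` is the
previous solution and `y` is the current one. -/
def fW {n : ℕ} (w : ℤ) (x y : BitStr n) : ℤ :=
  (ones y : ℤ) + (if firstBit x then w else 0)

/-- States of the time-linkage algorithms: (previous solution, current solution). -/
abbrev TLState (n : ℕ) := BitStr n × BitStr n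

/-- Hamming distance between two bitstrings. -/
def hamming {n : ℕ} (x y : BitStr n) : ℕ := (Finset.univ.filter fun i => x i ≠ y i).card

/-- Standard bit-wise mutation, flipping each bit independently with probability `1/n`:
`mutEA x y` is the probability that mutating `x` yields `y`. -/
def mutEA {n : ℕ} (x y : BitStr n) : ℝ :=
  (1 / n : ℝ) ^ hamming x y * (1 - 1 / n) ^ (n - hamming x y)

/-- RLS mutation, flipping exactly one bit chosen uniformly at random:
`mutRLS x y` is the probability that mutating `x` yields `y`. -/
def mutRLS {n : ℕ} (x y : BitStr n) : ℝ :=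
  if hamming x y = 1 then (1 / n : ℝ) else 0

/-- Transition matrix of the time-linkage (1+1)-type algorithm with mutation
distribution `m` on `f_w`: at state `(x', x)`, an offspring `y` sampled from
`m x ·` is accepted (the state moving to `(x, y)`) iff `f_w(x, y) ≥ f_w(x', x)`;
otherwise the state stays at `(x', x)`. -/
def tlTrans {n : ℕ} (m : BitStr n → BitStr n → ℝ) (w : ℤ) (s t : TLState n) : ℝ :=
  (∑ y : BitStr n, if fW w s.1 s.2 ≤ fW w s.2 y ∧ t = (s.2, y) then m s.2 y else 0) +
    if t = s then ∑ y : BitStr n, if ¬ fW w s.1 s.2 ≤ fW w s.2 y then m s.2 y else 0 else 0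

/-- Transition matrix of the time-linkage (1+1) EA on `f_w`. -/
def transEA {n : ℕ} (w : ℤ) : TLState n → TLState n → ℝ := tlTrans mutEA w

/-- Transition matrix of the time-linkage RLS on `f_w`. -/
def transRLS {n : ℕ} (w : ℤ) : TLState n → TLState n → ℝ := tlTrans mutRLS w

/-- Probability that the chain with transition matrix `P` started at `s`
visits a state in `E` within the first `T` steps (including time 0). -/
def hitWithin {n : ℕ} (P : TLState n → TLState n → ℝ) (E : TLState n → Prop) :
    ℕ → TLState n → ℝ
  | 0, s => if E s then 1 else 0
  | T + 1, s => if E s then 1 else ∑ t : TLState n, P s t * hitWithin P E T t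

/-- Probability that the chain started at `s` ever visits a state in `E`. -/
def hitProb {n : ℕ} (P : TLState n → TLState n → ℝ) (E : TLState n → Prop)
    (s : TLState n) : ℝ := ⨆ T : ℕ, hitWithin P E T s

/-- Probability that the chain started at `s` visits a state in `E` at some
time `≥ 1` (i.e. at a strictly later time). -/
def hitProbLater {n : ℕ} (P : TLState n → TLState n → ℝ) (E : TLState n → Prop)
    (s : TLState n) : ℝ := ⨆ T : ℕ, ∑ t : TLState n, P s t * hitWithin P E T t

/-- Probability that the chain started at `s` visits `A` within `T` steps
without having visited `B` strictly before (`A` has priority on common states). -/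
def raceWithin {n : ℕ} (P : TLState n → TLState n → ℝ) (A B : TLState n → Prop) :
    ℕ → TLState n → ℝ
  | 0, s => if A s then 1 else 0
  | T + 1, s =>
      if A s then 1 else if B s then 0 else ∑ t : TLState n, P s t * raceWithin P A B T t

/-- Probability that the chain started at `s` eventually visits `A` before `B`,
i.e. reaches `A` without having visited `B` strictly before. -/
def raceProb {n : ℕ} (P : TLState n → TLState n → ℝ) (A B : TLState n → Prop)
    (s : TLState n) : ℝ := ⨆ T : ℕ, raceWithin P A B T s

/-- Probability that the chain started at `s` enters the set `A` within `T`
steps and at the first entrance time is in `E`. -/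
def firstHitInWithin {n : ℕ} (P : TLState n → TLState n → ℝ) (A E : TLState n → Prop) :
    ℕ → TLState n → ℝ
  | 0, s => if A s then (if E s then 1 else 0) else 0
  | T + 1, s =>
      if A s then (if E s then 1 else 0)
      else ∑ t : TLState n, P s t * firstHitInWithin P A E T t

/-- Probability that the chain started at `s` eventually enters the set `A`
and at the first entrance time is in `E`. -/
def firstHitInProb {n : ℕ} (P : TLState n → TLState n → ℝ) (A E : TLState n → Prop)
    (s : TLState n) : ℝ := ⨆ T : ℕ, firstHitInWithin P A E T s

/-- Expected hitting time of `E` for the chain started at `s` (in `ℝ≥0∞`),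
via `E[τ] = ∑_{T ≥ 0} P[τ > T]`. -/
def expHitTime {n : ℕ} (P : TLState n → TLState n → ℝ) (E : TLState n → Prop)
    (s : TLState n) : ℝ≥0∞ := ∑' T : ℕ, ENNReal.ofReal (1 - hitWithin P E T s)

/-- Probability that the chain started at `s` never visits a state in `B`. -/
def avoidProb {n : ℕ} (P : TLState n → TLState n → ℝ) (B : TLState n → Prop)
    (s : TLState n) : ℝ := 1 - hitProb P B s

/-- `E[τ_E · 1_{B is never visited}]` for the chain started at `s` (in `ℝ≥0∞`),
using `P[τ_E > T and B never visited] = P[B never visited] − P[E hit within T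
steps, avoiding B]`, which is valid whenever `B` cannot be visited anymore once
`E` has been reached. -/
def expHitTimeAvoid {n : ℕ} (P : TLState n → TLState n → ℝ) (E B : TLState n → Prop)
    (s : TLState n) : ℝ≥0∞ :=
  ∑' T : ℕ, ENNReal.ofReal (avoidProb P B s - raceWithin P E B T s)

/-- The global optimum for negative weight `w < 0`: the current solution is
`1^n` and the stored previous first bit is `0`. -/
def OptNeg {n : ℕ} (s : TLState n) : Prop := s.2 = allOnes n ∧ firstBit s.1 = false

/-- The global optimum for positive weight `w > 0`: the current solution is
`1^n` and the stored previous first bit is `1`. -/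
def OptPos {n : ℕ} (s : TLState n) : Prop := s.2 = allOnes n ∧ firstBit s.1 = true

/-- Event I for the (1+1) EA (for `w < -1`): first bit pattern `(0,1)`,
current solution not `1^n`, and `|x_{[2..n]}| ≥ w + n`. -/
def EventIEA {n : ℕ} (w : ℤ) (s : TLState n) : Prop :=
  firstBit s.1 = false ∧ firstBit s.2 = true ∧ s.2 ≠ allOnes n ∧
    w + n ≤ (onesTail s.2 : ℤ)

/-- Event I for the RLS (for `w < -1`): first bit pattern `(0,1)` and the
current solution is not `1^n`. -/
def EventIRLS {n : ℕ} (s : TLState n) : Prop :=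
  firstBit s.1 = false ∧ firstBit s.2 = true ∧ s.2 ≠ allOnes n

/-- Event II: the current solution is `1^n` and the stored first bit is `1`. -/
def EventII {n : ℕ} (s : TLState n) : Prop :=
  firstBit s.1 = true ∧ s.2 = allOnes n

/-- Event III for the (1+1) EA (for `w > 0`): first bit pattern `(1,0)` and
`|x_{[2..n]}| ≥ n - w + 1`. -/
def EventIIIEA {n : ℕ} (w : ℤ) (s : TLState n) : Prop :=
  firstBit s.1 = true ∧ firstBit s.2 = false ∧ (n : ℤ) - w + 1 ≤ (onesTail s.2 : ℤ)

/-- Event III for the RLS (for `w > 1`): first bit pattern `(1,0)`. -/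
def EventIIIRLS {n : ℕ} (s : TLState n) : Prop :=
  firstBit s.1 = true ∧ firstBit s.2 = false

/-- Euler's number `e`. -/
def eu : ℝ := Real.exp 1

end

/-!
From a state with first-bit pattern `(1, 0)` an offspring is accepted only if it has at least
`w` more one-bits than the current solution. A single bit flip cannot achieve this, and when
`k ≥ n - w + 1` no bitstring can, so in (i) and (ii) the chain never moves.

For (iii), the states outside Event III are exactly those of fitness at most `n` or with current
first bit `1`. Sort them into levels by their distance `n + w - f_w` to the optimum and, on each
level, take a state minimising the probability of reaching the optimum before Event III. Every
offspring it accepts climbs a level, stays on the level (no loss, by minimality) or enters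
Event III; setting the first bit of an offspring of the last kind gives one of the first kind
that is `n - 1` times as likely. So each level costs at most a factor `1 - 1/n`, and at most
`n - 1` levels remain: the probability is at least `(1 - 1/n)^(n-1) ≥ e⁻¹`.

To leave the starting state the EA must flip at least `w` of its at most `(1 - b) n` zero-bits,
which has probability `q ≤ C((1-b)n, w) n^(-w) ≤ ((1-b)e/w)^w`; the chain stays put for a
geometric number of steps, whose mean is `1/q`.
-/

namespace TimeLinkage

open Finset Filter Topology

variable {n : ℕ}

section Bitstrings

lemma ones_le (x : BitStr n) : ones x ≤ n :=
  (card_filter_le _ _).trans_eq (card_fin n)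

lemma ones_add_zeros (x : BitStr n) : ones x + zeros x = n := by
  simpa [ones, zeros] using card_filter_add_card_filter_not (s := univ) fun i => x i = true

lemma ones_allOnes : ones (allOnes n) = n := by
  simp [ones, allOnes]

lemma eq_allOnes_of_ones_eq {x : BitStr n} (h : ones x = n) : x = allOnes n := by
  have huniv : univ.filter (fun i => x i = true) = univ :=
    eq_univ_of_card _ (h.trans (Fintype.card_fin n).symm)
  funext i
  simpa [allOnes] using (filter_eq_self.1 huniv) i (mem_univ i)

lemma firstBit_eq (hn : 0 < n) (x : BitStr n) : firstBit x = x ⟨0, hn⟩ := by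
  simp [firstBit, hn]

lemma firstBit_allOnes (hn : 0 < n) : firstBit (allOnes n) = true := by
  simp [firstBit_eq hn, allOnes]

lemma ones_eq_onesTail {x : BitStr n} (hn : 0 < n) (hx : firstBit x = false) :
    ones x = onesTail x := by
  rw [firstBit_eq hn] at hx
  refine congrArg card (filter_congr fun i _ => ⟨fun hi => ⟨hi, ?_⟩, And.left⟩)
  rintro h0
  rw [show i = ⟨0, hn⟩ from Fin.ext h0, hx] at hi
  exact Bool.false_ne_true hi

lemma ones_le_ones_add_card_flipped (x y : BitStr n) :
    ones y ≤ ones x + #(univ.filter fun i => x i = false ∧ y i = true) := by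
  refine (card_le_card fun i hi => ?_).trans (card_union_le _ _)
  cases hxi : x i <;> simp_all

lemma ones_le_ones_add_hamming (x y : BitStr n) : ones y ≤ ones x + hamming x y :=
  (ones_le_ones_add_card_flipped x y).trans <| Nat.add_le_add_left
    (card_le_card <| monotone_filter_right _ fun i _ hi => by simp [hi.1, hi.2]) _

lemma ones_update_true {y : BitStr n} {i : Fin n} (hy : y i = false) :
    ones (Function.update y i true) = ones y + 1 := by
  have hset : univ.filter (fun j => Function.update y i true j = true)
      = insert i (univ.filter fun j => y j = true) := by
    ext j
    by_cases hj : j = i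
    · subst hj; simp
    · simp [hj]
  rw [ones, hset, card_insert_of_notMem (by simp [hy]), ones]

end Bitstrings

section Mutation

lemma mutEA_eq_prod (x y : BitStr n) :
    mutEA x y = ∏ i, if y i = x i then 1 - 1 / (n : ℝ) else 1 / n := by
  have hsplit := card_filter_add_card_filter_not (s := univ) fun i => y i = x i
  have hham : #(univ.filter fun i => ¬ y i = x i) = hamming x y :=
    congrArg card (filter_congr fun i _ => ne_comm)
  rw [card_univ, Fintype.card_fin, hham] at hsplit
  rw [prod_ite, mutEA, mul_comm, prod_const, prod_const, hham,
    show n - hamming x y = #(univ.filter fun i => y i = x i) by omega]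

lemma one_sub_one_div_nonneg (n : ℕ) : 0 ≤ 1 - 1 / (n : ℝ) :=
  sub_nonneg.2 (by rw [one_div]; exact Nat.cast_inv_le_one n)

lemma mutEA_nonneg (x y : BitStr n) : 0 ≤ mutEA x y :=
  mul_nonneg (pow_nonneg (by positivity) _) (pow_nonneg (one_sub_one_div_nonneg n) _)

lemma mutEA_pos (hn : 2 ≤ n) (x y : BitStr n) : 0 < mutEA x y := by
  have h : (1 / n : ℝ) ≤ 1 / 2 := by gcongr; exact_mod_cast hn
  unfold mutEA
  exact mul_pos (pow_pos (by positivity) _) (pow_pos (by linarith) _)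

lemma sum_mutEA (x : BitStr n) : ∑ y, mutEA x y = 1 := by
  let f : Fin n → Bool → ℝ := fun i b => if b = x i then 1 - 1 / (n : ℝ) else 1 / n
  calc ∑ y, mutEA x y = ∑ y : BitStr n, ∏ i, f i (y i) := by simp_rw [mutEA_eq_prod]; rfl
    _ = ∏ i, ∑ b, f i b := (Fintype.prod_sum f).symm
    _ = 1 := prod_eq_one fun i _ => by cases hx : x i <;> simp [f, hx]

lemma sum_mutEA_flips (x : BitStr n) (S : Finset (Fin n)) :
    ∑ y, (if ∀ i ∈ S, y i ≠ x i then mutEA x y else 0) = (1 / n : ℝ) ^ #S := by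
  let f : Fin n → Bool → ℝ := fun i b =>
    if i ∈ S ∧ b = x i then 0 else if b = x i then 1 - 1 / (n : ℝ) else 1 / n
  have hfactor : ∀ y : BitStr n,
      (if ∀ i ∈ S, y i ≠ x i then mutEA x y else 0) = ∏ i, f i (y i) := by
    intro y
    split_ifs with hS
    · rw [mutEA_eq_prod]
      exact prod_congr rfl fun i _ => by by_cases hi : i ∈ S <;> simp_all [f]
    · push Not at hS
      obtain ⟨i, hi, hyi⟩ := hS
      exact (prod_eq_zero (mem_univ i) (by simp [f, hi, hyi])).symm
  calc _ = ∑ y : BitStr n, ∏ i, f i (y i) := sum_congr rfl fun y _ => hfactor y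
    _ = ∏ i, ∑ b, f i b := (Fintype.prod_sum f).symm
    _ = ∏ i, if i ∈ S then 1 / (n : ℝ) else 1 := prod_congr rfl fun i _ => by
      by_cases hi : i ∈ S <;> cases hx : x i <;> simp [f, hi, hx]
    _ = _ := by rw [prod_ite_mem, univ_inter, prod_const]

lemma mutEA_update_true {v y : BitStr n} {i : Fin n} (hv : v i = true) (hy : y i = false) :
    mutEA v (Function.update y i true) = (n - 1) * mutEA v y := by
  have hn : (n : ℝ) ≠ 0 := by have := i.pos; positivity
  rw [mutEA_eq_prod, mutEA_eq_prod, ← mul_prod_erase univ _ (mem_univ i),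
    ← mul_prod_erase univ _ (mem_univ i),
    prod_congr rfl fun j hj => by rw [Function.update_of_ne (ne_of_mem_erase hj)]]
  simp only [Function.update_self, hv, hy, Bool.false_eq_true, if_true, if_false, ← mul_assoc]
  field_simp

lemma sum_mutEA_ones_ge_le (x : BitStr n) (k : ℕ) :
    ∑ y, (if ones x + k ≤ ones y then mutEA x y else 0)
      ≤ (zeros x).choose k * (1 / n : ℝ) ^ k := by
  set Z := univ.filter fun i => x i = false
  have hcover : ∀ y : BitStr n, (if ones x + k ≤ ones y then mutEA x y else 0)
      ≤ ∑ S ∈ Z.powersetCard k, if ∀ i ∈ S, y i ≠ x i then mutEA x y else 0 := by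
    intro y
    have hterm_nonneg : ∀ S ∈ Z.powersetCard k,
        0 ≤ if ∀ i ∈ S, y i ≠ x i then mutEA x y else 0 :=
      fun S _ => by split_ifs <;> simp [mutEA_nonneg]
    split_ifs with hk
    · obtain ⟨S, hSD, hS⟩ := exists_subset_card_eq
        (show k ≤ #(univ.filter fun i => x i = false ∧ y i = true) by
          have := ones_le_ones_add_card_flipped x y; omega)
      have hSZ : S ∈ Z.powersetCard k :=
        mem_powersetCard.2 ⟨hSD.trans (monotone_filter_right _ fun _ _ h => h.1), hS⟩
      have hflip : ∀ i ∈ S, y i ≠ x i := fun i hi => by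
        have := (mem_filter.1 (hSD hi)).2; simp [this.1, this.2]
      refine le_of_eq_of_le ?_ (single_le_sum hterm_nonneg hSZ)
      rw [if_pos hflip]
    · exact sum_nonneg hterm_nonneg
  calc _ ≤ ∑ y, ∑ S ∈ Z.powersetCard k, if ∀ i ∈ S, y i ≠ x i then mutEA x y else 0 :=
        sum_le_sum fun y _ => hcover y
    _ = ∑ S ∈ Z.powersetCard k, (1 / n : ℝ) ^ #S := by
        rw [sum_comm]; exact sum_congr rfl fun S _ => sum_mutEA_flips x S
    _ = _ := by
        rw [sum_congr rfl fun S hS => by rw [(mem_powersetCard.1 hS).2], sum_const,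
          card_powersetCard, nsmul_eq_mul]
        rfl

lemma sub_one_mul_sum_mutEA_le {v : BitStr n} {i : Fin n} {bad good : BitStr n → Prop}
    [DecidablePred bad] [DecidablePred good]
    (hflip : ∀ y, bad y → v i = true ∧ y i = false ∧ good (Function.update y i true)) :
    (n - 1) * ∑ y, (if bad y then mutEA v y else 0)
      ≤ ∑ y, if good y then mutEA v y else 0 := by
  have hinj : Set.InjOn (fun y : BitStr n => Function.update y i true) (univ.filter bad) := by
    intro y hy y' hy' heq
    funext j
    by_cases hj : j = i
    · subst hj
      rw [(hflip y (mem_filter.1 hy).2).2.1, (hflip y' (mem_filter.1 hy').2).2.1]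
    · simpa [Function.update_of_ne hj] using congrFun heq j
  rw [← sum_filter, ← sum_filter, mul_sum]
  calc ∑ y ∈ univ.filter bad, ((n : ℝ) - 1) * mutEA v y
      = ∑ y ∈ univ.filter bad, mutEA v (Function.update y i true) := by
        refine sum_congr rfl fun y hy => ?_
        obtain ⟨hv, hy, -⟩ := hflip y (mem_filter.1 hy).2
        rw [mutEA_update_true hv hy]
    _ = ∑ z ∈ (univ.filter bad).image fun y => Function.update y i true, mutEA v z :=
        (sum_image hinj).symm
    _ ≤ ∑ z ∈ univ.filter good, mutEA v z := by
        refine sum_le_sum_of_subset_of_nonneg (fun z hz => ?_) fun z _ _ => mutEA_nonneg v z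
        obtain ⟨y, hy, rfl⟩ := mem_image.1 hz
        exact mem_filter.2 ⟨mem_univ _, (hflip y (mem_filter.1 hy).2).2.2⟩

end Mutation

section Chain

def IsStochastic {α : Type*} [Fintype α] (P : α → α → ℝ) : Prop :=
  (∀ a b, 0 ≤ P a b) ∧ ∀ a, ∑ b, P a b = 1

lemma isStochastic_mutEA : IsStochastic (mutEA (n := n)) :=
  ⟨mutEA_nonneg, sum_mutEA⟩

lemma sum_tlTrans_mul (m : BitStr n → BitStr n → ℝ) (w : ℤ) (s : TLState n)
    (g : TLState n → ℝ) :
    ∑ t, tlTrans m w s t * g t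
      = ∑ y, m s.2 y * if fW w s.1 s.2 ≤ fW w s.2 y then g (s.2, y) else g s := by
  simp only [tlTrans, add_mul, sum_add_distrib, sum_mul, ite_mul, zero_mul, ite_and]
  rw [sum_comm]
  simp only [sum_ite_eq', mem_univ, if_true, ← sum_add_distrib]
  refine sum_congr rfl fun y _ => ?_
  split_ifs <;> simp

lemma IsStochastic.tlTrans {m : BitStr n → BitStr n → ℝ} (hm : IsStochastic m) (w : ℤ) :
    IsStochastic (tlTrans m w) := by
  refine ⟨fun s t => ?_, fun s => ?_⟩
  · have h := sum_tlTrans_mul m w s fun u => if u = t then 1 else 0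
    simp only [mul_ite, mul_one, mul_zero, sum_ite_eq', mem_univ, if_true] at h
    rw [h]
    exact sum_nonneg fun y _ => by split_ifs <;> simp [hm.1]
  · simpa [hm.2] using sum_tlTrans_mul m w s fun _ => 1

variable {P : TLState n → TLState n → ℝ} {A B : TLState n → Prop}

lemma hitWithin_eq_raceWithin (E : TLState n → Prop) (T : ℕ) (s : TLState n) :
    hitWithin P E T s = raceWithin P E (fun _ => False) T s := by
  induction T generalizing s with
  | zero => rfl
  | succ T ih => simp [hitWithin, raceWithin, ih]

lemma raceWithin_mem_Icc (hP : IsStochastic P) (T : ℕ) (s : TLState n) :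
    raceWithin P A B T s ∈ Set.Icc 0 1 := by
  induction T generalizing s with
  | zero => unfold raceWithin; split_ifs <;> simp
  | succ T ih =>
    unfold raceWithin
    split_ifs
    iterate 2 simp
    refine ⟨sum_nonneg fun t _ => mul_nonneg (hP.1 s t) (ih t).1, ?_⟩
    calc ∑ t, P s t * raceWithin P A B T t ≤ ∑ t, P s t :=
          sum_le_sum fun t _ => mul_le_of_le_one_right (hP.1 s t) (ih t).2
      _ = 1 := hP.2 s

lemma raceWithin_le_succ (hP : IsStochastic P) (T : ℕ) (s : TLState n) :
    raceWithin P A B T s ≤ raceWithin P A B (T + 1) s := by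
  induction T generalizing s with
  | zero =>
    by_cases hA : A s
    · simp [raceWithin, hA]
    · rw [raceWithin, if_neg hA]
      exact (raceWithin_mem_Icc hP 1 s).1
  | succ T ih =>
    rw [raceWithin, raceWithin]
    split_ifs
    iterate 2 rfl
    exact sum_le_sum fun t _ => mul_le_mul_of_nonneg_left (ih t) (hP.1 s t)

lemma tendsto_raceWithin (hP : IsStochastic P) (s : TLState n) :
    Tendsto (fun T => raceWithin P A B T s) atTop (𝓝 (raceProb P A B s)) :=
  tendsto_atTop_ciSup (monotone_nat_of_le_succ fun T => raceWithin_le_succ hP T s)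
    ⟨1, Set.forall_mem_range.2 fun T => (raceWithin_mem_Icc hP T s).2⟩

lemma raceProb_nonneg (hP : IsStochastic P) (s : TLState n) : 0 ≤ raceProb P A B s :=
  ge_of_tendsto' (tendsto_raceWithin hP s) fun T => (raceWithin_mem_Icc hP T s).1

lemma raceProb_eq_one {s : TLState n} (hA : A s) : raceProb P A B s = 1 := by
  have : ∀ T, raceWithin P A B T s = 1 := by rintro (_ | _) <;> simp [raceWithin, hA]
  simp [raceProb, this]

lemma raceProb_eq_sum (hP : IsStochastic P) {s : TLState n} (hA : ¬ A s) (hB : ¬ B s) :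
    raceProb P A B s = ∑ t, P s t * raceProb P A B t := by
  refine tendsto_nhds_unique ((tendsto_raceWithin hP s).comp (tendsto_add_atTop_nat 1)) ?_
  simp only [Function.comp_def, raceWithin, hA, hB, if_false]
  exact tendsto_finsetSum _ fun t _ => (tendsto_raceWithin hP t).const_mul _

lemma hitProb_tlTrans_eq_zero {m : BitStr n → BitStr n → ℝ} {w : ℤ} {E : TLState n → Prop}
    {s : TLState n} (hstuck : ∀ y, fW w s.1 s.2 ≤ fW w s.2 y → m s.2 y = 0) (hE : ¬ E s) :
    hitProb (tlTrans m w) E s = 0 := by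
  have hzero : ∀ T, hitWithin (tlTrans m w) E T s = 0 := by
    intro T
    induction T with
    | zero => simp [hitWithin, hE]
    | succ T ih =>
      rw [hitWithin, if_neg hE, sum_tlTrans_mul]
      refine sum_eq_zero fun y _ => ?_
      split_ifs with hacc
      · rw [hstuck y hacc, zero_mul]
      · rw [ih, mul_zero]
  simp [hitProb, hzero]

lemma raceProb_tlTrans_eq_sum {m : BitStr n → BitStr n → ℝ} (hm : IsStochastic m) {w : ℤ}
    {A B : TLState n → Prop} {s : TLState n} (hA : ¬ A s) (hB : ¬ B s) :
    raceProb (tlTrans m w) A B s = ∑ y, m s.2 y * if fW w s.1 s.2 ≤ fW w s.2 y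
      then raceProb (tlTrans m w) A B (s.2, y) else raceProb (tlTrans m w) A B s := by
  rw [← sum_tlTrans_mul, ← raceProb_eq_sum (hm.tlTrans w) hA hB]

lemma raceProb_tlTrans_eq_of_accept_iff {m : BitStr n → BitStr n → ℝ} (hm : IsStochastic m)
    {w : ℤ} {A B : TLState n → Prop} {s : TLState n} (hA : ¬ A s) (hB : ¬ B s) {z : BitStr n}
    (hz : ∀ y, fW w s.1 s.2 ≤ fW w s.2 y ↔ y = z) (hpos : 0 < m s.2 z) :
    raceProb (tlTrans m w) A B s = raceProb (tlTrans m w) A B (s.2, z) := by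
  set ρ := raceProb (tlTrans m w) A B
  have h : ρ s = ∑ y, m s.2 y * if y = z then ρ (s.2, y) else ρ s := by
    simpa only [hz] using raceProb_tlTrans_eq_sum hm (w := w) hA hB
  have hmz : m s.2 z * (ρ s - ρ (s.2, z)) = 0 :=
    calc m s.2 z * (ρ s - ρ (s.2, z))
        = ∑ y, if y = z then m s.2 y * (ρ s - ρ (s.2, y)) else 0 := by simp
      _ = ∑ y, m s.2 y * ρ s - ∑ y, m s.2 y * if y = z then ρ (s.2, y) else ρ s := by
          rw [← sum_sub_distrib]
          exact sum_congr rfl fun y _ => by split_ifs <;> ring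
      _ = 0 := by rw [← h, ← sum_mul, hm.2, one_mul, sub_self]
  exact sub_eq_zero.1 ((mul_eq_zero.1 hmz).resolve_left hpos.ne')

end Chain

section HittingTime

variable {m : BitStr n → BitStr n → ℝ} {w : ℤ} {E : TLState n → Prop} {s : TLState n}

def acceptProb (m : BitStr n → BitStr n → ℝ) (w : ℤ) (s : TLState n) : ℝ :=
  ∑ y, if fW w s.1 s.2 ≤ fW w s.2 y then m s.2 y else 0

lemma acceptProb_mem_Icc (hm : IsStochastic m) : acceptProb m w s ∈ Set.Icc 0 1 :=
  ⟨sum_nonneg fun y _ => by split_ifs <;> simp [hm.1],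
    (sum_le_sum fun y _ => by split_ifs <;> simp [hm.1]).trans_eq (hm.2 s.2)⟩

lemma one_sub_acceptProb_pow_le (hm : IsStochastic m) (hE : ¬ E s) (T : ℕ) :
    (1 - acceptProb m w s) ^ T ≤ 1 - hitWithin (tlTrans m w) E T s := by
  have hq := acceptProb_mem_Icc (w := w) (s := s) hm
  induction T with
  | zero => simp [hitWithin, hE]
  | succ T ih =>
    have hle_one : ∀ t, hitWithin (tlTrans m w) E T t ≤ 1 := fun t => by
      rw [hitWithin_eq_raceWithin]; exact (raceWithin_mem_Icc (hm.tlTrans w) T t).2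
    have hstep : hitWithin (tlTrans m w) E (T + 1) s
        ≤ acceptProb m w s + (1 - acceptProb m w s) * hitWithin (tlTrans m w) E T s := by
      have hrest : ∑ y, (if fW w s.1 s.2 ≤ fW w s.2 y then 0 else m s.2 y)
          = 1 - acceptProb m w s := by
        rw [eq_sub_iff_add_eq, ← hm.2 s.2, acceptProb, ← sum_add_distrib]
        exact sum_congr rfl fun y _ => by split_ifs <;> simp
      rw [hitWithin, if_neg hE, sum_tlTrans_mul, ← hrest, sum_mul, acceptProb,
        ← sum_add_distrib]
      refine sum_le_sum fun y _ => ?_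
      split_ifs
      · simpa using mul_le_of_le_one_right (hm.1 _ _) (hle_one _)
      · simp
    calc (1 - acceptProb m w s) ^ (T + 1)
        = (1 - acceptProb m w s) * (1 - acceptProb m w s) ^ T := pow_succ' _ _
      _ ≤ (1 - acceptProb m w s) * (1 - hitWithin (tlTrans m w) E T s) :=
          mul_le_mul_of_nonneg_left ih (by linarith [hq.2])
      _ ≤ _ := by linarith

lemma inv_acceptProb_le_expHitTime (hm : IsStochastic m) (hE : ¬ E s) :
    (ENNReal.ofReal (acceptProb m w s))⁻¹ ≤ expHitTime (tlTrans m w) E s := by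
  set q := acceptProb m w s
  have hq := acceptProb_mem_Icc (w := w) (s := s) hm
  calc (ENNReal.ofReal q)⁻¹ ≤ (1 - ENNReal.ofReal (1 - q))⁻¹ := by
        refine ENNReal.inv_le_inv' (tsub_le_iff_right.2 ?_)
        rw [← ENNReal.ofReal_add hq.1 (by linarith [hq.2]), add_sub_cancel, ENNReal.ofReal_one]
    _ = ∑' T : ℕ, ENNReal.ofReal ((1 - q) ^ T) := by
        rw [← ENNReal.tsum_geometric]
        exact tsum_congr fun T => (ENNReal.ofReal_pow (by linarith [hq.2]) T).symm
    _ ≤ expHitTime (tlTrans m w) E s :=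
        ENNReal.tsum_le_tsum fun T => ENNReal.ofReal_le_ofReal (one_sub_acceptProb_pow_le hm hE T)

end HittingTime

section Fitness

variable {w : ℤ}

lemma pos_of_firstBit_eq_true {x : BitStr n} (h : firstBit x = true) : 0 < n := by
  by_contra hn
  simp [firstBit, hn] at h

lemma fW_of_firstBit_true {x : BitStr n} (y : BitStr n) (hx : firstBit x = true) :
    fW w x y = ones y + w := by
  simp [fW, hx]

lemma fW_of_firstBit_false {x : BitStr n} (y : BitStr n) (hx : firstBit x = false) :
    fW w x y = ones y := by
  simp [fW, hx]

lemma optPos_iff_add_le_fW (hw : 0 < w) {t : TLState n} :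
    OptPos t ↔ n + w ≤ fW w t.1 t.2 := by
  have := ones_le t.2
  cases h1 : firstBit t.1
  · simp only [OptPos, h1, Bool.false_eq_true, and_false, false_iff, not_le,
      fW_of_firstBit_false _ h1]
    omega
  · simp only [OptPos, h1, and_true, fW_of_firstBit_true _ h1]
    exact ⟨fun h => by simp [h, ones_allOnes], fun h => eq_allOnes_of_ones_eq (by omega)⟩

lemma eventIIIEA_iff {t : TLState n} :
    EventIIIEA w t ↔ n < fW w t.1 t.2 ∧ firstBit t.2 = false := by
  have := ones_le t.2
  constructor
  · rintro ⟨h1, h2, hk⟩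
    rw [fW_of_firstBit_true _ h1, ones_eq_onesTail (pos_of_firstBit_eq_true h1) h2]
    exact ⟨by omega, h2⟩
  · rintro ⟨hlt, h2⟩
    cases h1 : firstBit t.1
    · rw [fW_of_firstBit_false _ h1] at hlt; omega
    · rw [fW_of_firstBit_true _ h1, ones_eq_onesTail (pos_of_firstBit_eq_true h1) h2] at hlt
      exact ⟨h1, h2, by omega⟩

lemma eventIIIEA_update_first (hn : 0 < n) {v y : BitStr n} (h : EventIIIEA w (v, y)) :
    v ⟨0, hn⟩ = true ∧ y ⟨0, hn⟩ = false ∧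
      fW w v (Function.update y ⟨0, hn⟩ true) = fW w v y + 1 ∧
      ¬ EventIIIEA w (v, Function.update y ⟨0, hn⟩ true) := by
  obtain ⟨hv, hy, -⟩ := h
  have hy' : firstBit (Function.update y ⟨0, hn⟩ true) = true := by simp [firstBit_eq hn]
  rw [firstBit_eq hn] at hv hy
  refine ⟨hv, hy, ?_, fun h => by simp [EventIIIEA, hy'] at h⟩
  have hv' : firstBit v = true := by rwa [firstBit_eq hn]
  rw [fW_of_firstBit_true _ hv', fW_of_firstBit_true _ hv', ones_update_true hy]
  push_cast
  ring

lemma not_optPos_of_firstBit_false {t : TLState n} (hn : 0 < n) (h2 : firstBit t.2 = false) :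
    ¬ OptPos t := fun h => by simp [h.1, firstBit_allOnes hn] at h2

lemma fW_le_fW_iff {s : TLState n} (h1 : firstBit s.1 = true) (h2 : firstBit s.2 = false)
    (y : BitStr n) : fW w s.1 s.2 ≤ fW w s.2 y ↔ ones s.2 + w ≤ ones y := by
  rw [fW_of_firstBit_true _ h1, fW_of_firstBit_false _ h2]

end Fitness

section Stuck

variable {w : ℤ} {s : TLState n}

lemma hitProb_transRLS_eq_zero (hw : 2 ≤ w) (h1 : firstBit s.1 = true)
    (h2 : firstBit s.2 = false) : hitProb (transRLS w) OptPos s = 0 := by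
  refine hitProb_tlTrans_eq_zero (fun y hacc => ?_)
    (not_optPos_of_firstBit_false (pos_of_firstBit_eq_true h1) h2)
  rw [fW_le_fW_iff h1 h2] at hacc
  have := ones_le_ones_add_hamming s.2 y
  rw [mutRLS, if_neg (by omega)]

lemma hitProb_transEA_eq_zero (h1 : firstBit s.1 = true) (h2 : firstBit s.2 = false)
    (hk : (n : ℤ) - w + 1 ≤ onesTail s.2) : hitProb (transEA w) OptPos s = 0 := by
  have hn := pos_of_firstBit_eq_true h1
  refine hitProb_tlTrans_eq_zero (fun y hacc => ?_) (not_optPos_of_firstBit_false hn h2)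
  rw [fW_le_fW_iff h1 h2, ones_eq_onesTail hn h2] at hacc
  have := ones_le y
  omega

end Stuck

section ExpectedTime

variable {s : TLState n}

lemma acceptProb_mutEA_le (k : ℕ) (h1 : firstBit s.1 = true) (h2 : firstBit s.2 = false) :
    acceptProb mutEA k s ≤ (zeros s.2).choose k * (1 / n : ℝ) ^ k := by
  refine le_of_eq_of_le (sum_congr rfl fun y _ => ?_) (sum_mutEA_ones_ge_le s.2 k)
  simp only [fW_le_fW_iff h1 h2]
  norm_cast

lemma choose_mul_one_div_pow_le (z k : ℕ) :
    (z.choose k : ℝ) * (1 / n) ^ k ≤ (Real.exp 1 * z / (k * n)) ^ k := by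
  rcases k.eq_zero_or_pos with rfl | hk
  · simp
  have hkk : (0 : ℝ) < (k : ℝ) ^ k := by positivity
  have hfact : (1 : ℝ) / k.factorial ≤ Real.exp k / (k : ℝ) ^ k := by
    rw [div_le_div_iff₀ (by positivity) hkk, one_mul, ← div_le_iff₀ (by positivity)]
    exact Real.pow_div_factorial_le_exp k (by positivity) k
  calc (z.choose k : ℝ) * (1 / n) ^ k ≤ (z : ℝ) ^ k / k.factorial * (1 / n) ^ k := by
        gcongr; exact Nat.choose_le_pow_div k z
    _ = (z / n : ℝ) ^ k * (1 / k.factorial) := by ring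
    _ ≤ (z / n : ℝ) ^ k * (Real.exp k / (k : ℝ) ^ k) := by gcongr
    _ = (Real.exp 1 * z / (k * n)) ^ k := by
        rw [← Real.exp_one_pow]; ring

lemma le_expHitTime_transEA {w : ℤ} (hw : 0 < w) (h1 : firstBit s.1 = true)
    (h2 : firstBit s.2 = false) {b : ℝ} (hb : b < 1) (hones : b * n ≤ ones s.2) :
    ENNReal.ofReal (((w : ℝ) / ((1 - b) * eu)) ^ w) ≤ expHitTime (transEA w) OptPos s := by
  lift w to ℕ using hw.le
  have hk : (0 : ℝ) < w := by exact_mod_cast hw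
  have hn : (0 : ℝ) < n := by exact_mod_cast pos_of_firstBit_eq_true h1
  have hzeros : (zeros s.2 : ℝ) ≤ (1 - b) * n := by
    have : (ones s.2 : ℝ) + zeros s.2 = n := by exact_mod_cast ones_add_zeros s.2
    linarith
  have hq : acceptProb mutEA w s ≤ ((1 - b) * eu / w) ^ w :=
    (acceptProb_mutEA_le w h1 h2).trans <| (choose_mul_one_div_pow_le _ w).trans <|
      pow_le_pow_left₀ (by positivity) (by
        rw [div_le_div_iff₀ (by positivity) hk, eu]
        nlinarith [mul_le_mul_of_nonneg_left hzeros (mul_pos (Real.exp_pos 1) hk).le]) w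
  calc ENNReal.ofReal (((w : ℝ) / ((1 - b) * eu)) ^ (w : ℤ))
      = (ENNReal.ofReal (((1 - b) * eu / w) ^ w))⁻¹ := by
        rw [zpow_natCast, ← ENNReal.ofReal_inv_of_pos (by unfold eu; positivity), ← inv_pow,
          inv_div]
    _ ≤ (ENNReal.ofReal (acceptProb mutEA w s))⁻¹ :=
        ENNReal.inv_le_inv.2 (ENNReal.ofReal_le_ofReal hq)
    _ ≤ _ := inv_acceptProb_le_expHitTime isStochastic_mutEA
        (not_optPos_of_firstBit_false (pos_of_firstBit_eq_true h1) h2)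

end ExpectedTime

section Race

lemma mul_sum_good_le_of_eq_sum {ι : Type*} [Fintype ι] {p f : ι → ℝ}
    (hp0 : ∀ i, 0 ≤ p i) (hp1 : ∑ i, p i = 1) {good bad : ι → Prop}
    [DecidablePred good] [DecidablePred bad] {x g : ℝ} (hx : x = ∑ i, p i * f i)
    (hgood : ∀ i, good i → g ≤ f i) (hbad : ∀ i, bad i → ¬ good i ∧ 0 ≤ f i)
    (hrest : ∀ i, ¬ good i → ¬ bad i → x ≤ f i) :
    g * ∑ i, (if good i then p i else 0)
      ≤ x * (∑ i, (if good i then p i else 0) + ∑ i, if bad i then p i else 0) := by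
  have hpoint : ∀ i, g * (if good i then p i else 0)
      + x * (p i - (if good i then p i else 0) - if bad i then p i else 0) ≤ p i * f i := by
    intro i
    by_cases hg : good i
    · have := hgood i hg
      have : ¬ bad i := fun hb => (hbad i hb).1 hg
      simp only [hg, this, if_true, if_false]
      nlinarith [hp0 i]
    · by_cases hb : bad i
      · simp only [hg, hb, if_true, if_false]
        nlinarith [hp0 i, (hbad i hb).2]
      · simp only [hg, hb, if_false]
        nlinarith [hp0 i, hrest i hg hb]
  have hsum := sum_le_sum fun i (_ : i ∈ univ) => hpoint i
  simp only [sum_add_distrib, ← mul_sum, sum_sub_distrib, hp1, ← hx] at hsum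
  linarith

lemma mul_one_sub_one_div_le (hn : 0 < n) {g x U R : ℝ} (hg : 0 ≤ g) (hU : 0 < U) (hR : 0 ≤ R)
    (hmass : g * U ≤ x * (U + R)) (hflip : (n - 1) * R ≤ U) : g * (1 - 1 / n) ≤ x := by
  have hn' : (0 : ℝ) < n := by exact_mod_cast hn
  have hc : (1 - 1 / (n : ℝ)) * (U + R) ≤ U := by
    refine le_of_mul_le_mul_left ?_ hn'
    calc n * ((1 - 1 / (n : ℝ)) * (U + R)) = (n - 1) * (U + R) := by field_simp
      _ ≤ n * U := by linarith
  refine le_of_mul_le_mul_right ?_ (show 0 < U + R by linarith)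
  calc g * (1 - 1 / n) * (U + R) = g * ((1 - 1 / n) * (U + R)) := by ring
    _ ≤ g * U := mul_le_mul_of_nonneg_left hc hg
    _ ≤ x * (U + R) := hmass

variable {w : ℤ}

lemma pow_succ_le_raceProb_of_improving (hn : 2 ≤ n) (hw : 0 < w) {d : ℕ}
    (ih : ∀ t : TLState n, ¬ EventIIIEA w t → n + w - fW w t.1 t.2 ≤ d →
      (1 - 1 / (n : ℝ)) ^ d ≤ raceProb (transEA w) OptPos (EventIIIEA w) t)
    {t : TLState n} (ht : ¬ EventIIIEA w t) (hlevel : n + w - fW w t.1 t.2 = d + 1)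
    (hmin : ∀ t' : TLState n, ¬ EventIIIEA w t' → fW w t'.1 t'.2 = fW w t.1 t.2 →
      raceProb (transEA w) OptPos (EventIIIEA w) t
        ≤ raceProb (transEA w) OptPos (EventIIIEA w) t')
    {y₀ : BitStr n} (hy₀ : fW w t.1 t.2 < fW w t.2 y₀)
    (hy₀III : ¬ EventIIIEA w (t.2, y₀)) :
    (1 - 1 / (n : ℝ)) ^ (d + 1) ≤ raceProb (transEA w) OptPos (EventIIIEA w) t := by
  set ρ := raceProb (transEA (n := n) w) OptPos (EventIIIEA w)
  set c : ℝ := 1 - 1 / n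
  have hA : ¬ OptPos t := by rw [optPos_iff_add_le_fW hw]; omega
  have hx : ρ t = ∑ y, mutEA t.2 y * if fW w t.1 t.2 ≤ fW w t.2 y then ρ (t.2, y) else ρ t :=
    raceProb_tlTrans_eq_sum isStochastic_mutEA hA ht
  set good := fun y => fW w t.1 t.2 < fW w t.2 y ∧ ¬ EventIIIEA w (t.2, y)
  set bad := fun y => fW w t.1 t.2 ≤ fW w t.2 y ∧ EventIIIEA w (t.2, y)
  set U := ∑ y, if good y then mutEA t.2 y else 0
  set R := ∑ y, if bad y then mutEA t.2 y else 0
  have hmass : c ^ d * U ≤ ρ t * (U + R) := by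
    refine mul_sum_good_le_of_eq_sum (good := good) (bad := bad) (mutEA_nonneg t.2)
      (sum_mutEA t.2) hx (fun y hy => ?_) (fun y hy => ⟨fun hg => hg.2 hy.2, ?_⟩)
      (fun y hg hb => ?_)
    · rw [if_pos hy.1.le]
      exact ih _ hy.2 (by dsimp only; omega)
    · split_ifs <;> exact raceProb_nonneg (isStochastic_mutEA.tlTrans w) _
    · split_ifs with hacc
      · have hIII : ¬ EventIIIEA w (t.2, y) := fun h => hb ⟨hacc, h⟩
        exact hmin _ hIII (by dsimp only; by_contra hne; exact hg ⟨by omega, hIII⟩)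
      · rfl
  have hflip : (n - 1) * R ≤ U := by
    have hn0 : 0 < n := by omega
    refine sub_one_mul_sum_mutEA_le (bad := bad) (good := good) (i := ⟨0, hn0⟩) fun y hb => ?_
    obtain ⟨hacc, hIII⟩ := hb
    obtain ⟨hv, hy, hfW, hIII'⟩ := eventIIIEA_update_first hn0 hIII
    exact ⟨hv, hy, show _ ∧ _ from ⟨by omega, hIII'⟩⟩
  have hU : 0 < U := (mutEA_pos hn t.2 y₀).trans_le <| by
    refine le_of_eq_of_le ?_ (single_le_sum (f := fun y => if good y then mutEA t.2 y else 0)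
      (fun y _ => by split_ifs <;> simp [mutEA_nonneg]) (mem_univ y₀))
    simp [good, hy₀, hy₀III]
  have hR : 0 ≤ R := sum_nonneg fun y _ => by split_ifs <;> simp [mutEA_nonneg]
  rw [pow_succ]
  exact mul_one_sub_one_div_le (by omega) (pow_nonneg (one_sub_one_div_nonneg n) d) hU hR
    hmass hflip

lemma pow_succ_le_raceProb_of_isMin (hn : 2 ≤ n) (hw : 0 < w) {d : ℕ}
    (ih : ∀ t : TLState n, ¬ EventIIIEA w t → n + w - fW w t.1 t.2 ≤ d →
      (1 - 1 / (n : ℝ)) ^ d ≤ raceProb (transEA w) OptPos (EventIIIEA w) t)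
    {t : TLState n} (ht : ¬ EventIIIEA w t) (hlevel : n + w - fW w t.1 t.2 = d + 1)
    (hmin : ∀ t' : TLState n, ¬ EventIIIEA w t' → fW w t'.1 t'.2 = fW w t.1 t.2 →
      raceProb (transEA w) OptPos (EventIIIEA w) t
        ≤ raceProb (transEA w) OptPos (EventIIIEA w) t') :
    (1 - 1 / (n : ℝ)) ^ (d + 1) ≤ raceProb (transEA w) OptPos (EventIIIEA w) t := by
  have hn0 : 0 < n := by omega
  have hIII_allOnes : ∀ x : BitStr n, ¬ EventIIIEA w (x, allOnes n) := fun x h => by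
    simp [EventIIIEA, firstBit_allOnes hn0] at h
  by_cases himp : fW w t.1 t.2 < fW w t.2 (allOnes n)
  · exact pow_succ_le_raceProb_of_improving hn hw ih ht hlevel hmin himp (hIII_allOnes _)
  -- The only stuck case: `t.2` starts with `0` and has fitness `n`, so only `1^n` is accepted,
  -- which leads to `(t.2, 1^n)` on the same level, from where `(1^n, 1^n)` is an improvement.
  have hv : firstBit t.2 = false := by
    by_contra hv
    rw [Bool.not_eq_false] at hv
    rw [fW_of_firstBit_true _ hv, ones_allOnes] at himp
    omega
  have hfW : fW w t.1 t.2 = n := by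
    have : fW w t.1 t.2 ≤ n := by
      by_contra h
      exact ht (eventIIIEA_iff.2 ⟨by omega, hv⟩)
    rw [fW_of_firstBit_false _ hv, ones_allOnes] at himp
    omega
  have hA : ¬ OptPos t := not_optPos_of_firstBit_false hn0 hv
  have heq : raceProb (transEA w) OptPos (EventIIIEA w) t
      = raceProb (transEA w) OptPos (EventIIIEA w) (t.2, allOnes n) := by
    refine raceProb_tlTrans_eq_of_accept_iff isStochastic_mutEA hA ht (fun y => ?_)
      (mutEA_pos hn _ _)
    rw [hfW, fW_of_firstBit_false _ hv]
    have := ones_le y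
    exact ⟨fun h => eq_allOnes_of_ones_eq (by omega), fun h => by simp [h, ones_allOnes]⟩
  have hfW₁ : fW w t.2 (allOnes n) = n := by
    rw [fW_of_firstBit_false _ hv, ones_allOnes]
  rw [heq]
  refine pow_succ_le_raceProb_of_improving hn hw ih (hIII_allOnes _) (by dsimp only; omega)
    (fun t' ht' h => heq ▸ hmin t' ht' (by dsimp only at h; omega)) (y₀ := allOnes n) ?_
    (hIII_allOnes _)
  simp only [hfW₁, fW_of_firstBit_true _ (firstBit_allOnes hn0), ones_allOnes]
  omega

lemma pow_le_raceProb (hn : 2 ≤ n) (hw : 0 < w) (d : ℕ) (t : TLState n)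
    (ht : ¬ EventIIIEA w t) (hgap : n + w - fW w t.1 t.2 ≤ d) :
    (1 - 1 / (n : ℝ)) ^ d ≤ raceProb (transEA w) OptPos (EventIIIEA w) t := by
  induction d generalizing t with
  | zero =>
    rw [raceProb_eq_one ((optPos_iff_add_le_fW hw).2 (by omega)), pow_zero]
  | succ d ih =>
    by_cases hd : n + w - fW w t.1 t.2 ≤ d
    · exact (pow_le_pow_of_le_one (one_sub_one_div_nonneg n) (by simp) d.le_succ).trans
        (ih t ht hd)
    obtain ⟨t₀, ht₀, hmin⟩ := exists_min_image
      (univ.filter fun t' => ¬ EventIIIEA w t' ∧ fW w t'.1 t'.2 = fW w t.1 t.2)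
      (raceProb (transEA w) OptPos (EventIIIEA w)) ⟨t, by simp [ht]⟩
    simp only [mem_filter, mem_univ, true_and] at ht₀ hmin
    refine (pow_succ_le_raceProb_of_isMin hn hw ih ht₀.1 (by omega)
      (fun t' ht' h => hmin t' ⟨ht', h.trans ht₀.2⟩)).trans (hmin t ⟨ht, rfl⟩)

end Race

lemma exp_neg_one_le_one_sub_one_div_pow (n : ℕ) :
    Real.exp (-1) ≤ (1 - 1 / (n : ℝ)) ^ (n - 1) := by
  rcases n with _ | m
  · simp [Real.exp_le_one_iff]
  have hinv : (1 - 1 / ((m + 1 : ℕ) : ℝ)) ^ (m + 1 - 1) = ((1 + (m : ℝ)⁻¹) ^ m)⁻¹ := by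
    rcases m.eq_zero_or_pos with rfl | hm
    · simp
    rw [Nat.add_sub_cancel, ← inv_pow]
    congr 1
    field_simp
    push_cast
    ring
  rw [hinv, Real.exp_neg]
  exact inv_anti₀ (by positivity) Real.one_add_inv_pow_le_exp

lemma exp_neg_one_le_raceProb {w : ℤ} (hn : 2 ≤ n) (hw : 0 < w) {t : TLState n}
    (ht : ¬ EventIIIEA w t) (hgap : n + w - fW w t.1 t.2 ≤ n - 1) :
    Real.exp (-1) ≤ raceProb (transEA w) OptPos (EventIIIEA w) t :=
  (exp_neg_one_le_one_sub_one_div_pow n).trans <|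
    pow_le_raceProb hn hw (n - 1) t ht (by push_cast [Nat.cast_sub (by omega : 1 ≤ n)]; omega)

end TimeLinkage

open TimeLinkage

theorem stmt17_general (n : ℕ) (b : ℝ) (hb : b ∈ Set.Ioo (0 : ℝ) (1 / 2))
    (w : ℤ) (hw : 2 ≤ w) (s : TLState n)
    (h1 : firstBit s.1 = true) (h2 : firstBit s.2 = false)
    (hones : b * n ≤ (ones s.2 : ℝ)) :
    (EventIIIRLS s ∧ hitProb (transRLS w) (OptPos (n := n)) s = 0) ∧
    ((n : ℤ) - w + 1 ≤ (onesTail s.2 : ℤ) →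
      EventIIIEA w s ∧ hitProb (transEA w) (OptPos (n := n)) s = 0) ∧
    (¬ ((n : ℤ) - w + 1 ≤ (onesTail s.2 : ℤ)) →
      raceProb (transEA w) (OptPos (n := n)) (EventIIIEA w) s ≥
        (1 - 1 / (n : ℝ)) * Real.exp (-(1 - b) * eu - 1) ∧
      ENNReal.ofReal (((w : ℝ) / ((1 - b) * eu)) ^ w) ≤
        expHitTime (transEA w) (OptPos (n := n)) s) := by
  obtain ⟨hb0, hb1⟩ := hb
  refine ⟨⟨⟨h1, h2⟩, hitProb_transRLS_eq_zero hw h1 h2⟩,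
    fun hk => ⟨⟨h1, h2, hk⟩, hitProb_transEA_eq_zero h1 h2 hk⟩,
    fun hk => ⟨?_, le_expHitTime_transEA (by omega) h1 h2 (by linarith) hones⟩⟩
  have hn : 0 < n := pos_of_firstBit_eq_true h1
  have hones_pos : 0 < ones s.2 := by
    have : 0 < b * n := by positivity
    exact_mod_cast this.trans_le hones
  have htail := ones_eq_onesTail hn h2
  calc (1 - 1 / (n : ℝ)) * Real.exp (-(1 - b) * eu - 1)
      ≤ Real.exp (-(1 - b) * eu - 1) :=
        mul_le_of_le_one_left (Real.exp_pos _).le (sub_le_self _ (by positivity))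
    _ ≤ Real.exp (-1) := Real.exp_le_exp.2 <| by
        have : 0 ≤ (1 - b) * eu := mul_nonneg (by linarith) (Real.exp_pos 1).le
        linarith
    _ ≤ _ := exp_neg_one_le_raceProb (by omega) (by omega) (fun h => hk h.2.2)
          (by rw [fW_of_firstBit_true _ h1]; omega)

/-- Let `b ∈ (0, 1/2)` and `w ≥ 2`, and consider a starting
state `(x', x)` with first bit pattern `(1, 0)` and `|x| ≥ b·n`; set
`k = |x_{[2..n]}|`. Then (i) for the time-linkage RLS on `f_w`, Event III holds
at the start and the RLS never reaches the global optimum; (ii) for the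
time-linkage (1+1) EA, if `k ≥ n - w + 1` then Event III holds at the start
and the EA never reaches the global optimum; (iii) otherwise the EA reaches
the global optimum before Event III happens with probability at least
`(1 - 1/n)·e^{-(1-b)e-1}`, and the expected number of generations until the EA
reaches the global optimum is at least `(w/((1-b)e))^w`. -/
theorem stmt17 (n : ℕ) (hn : 1 ≤ n) (b : ℝ) (hb : b ∈ Set.Ioo (0 : ℝ) (1 / 2))
    (w : ℤ) (hw : 2 ≤ w) (s : TLState n)
    (h1 : firstBit s.1 = true) (h2 : firstBit s.2 = false)
    (hones : b * n ≤ (ones s.2 : ℝ)) :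
    (EventIIIRLS s ∧ hitProb (transRLS w) (OptPos (n := n)) s = 0) ∧
    ((n : ℤ) - w + 1 ≤ (onesTail s.2 : ℤ) →
      EventIIIEA w s ∧ hitProb (transEA w) (OptPos (n := n)) s = 0) ∧
    (¬ ((n : ℤ) - w + 1 ≤ (onesTail s.2 : ℤ)) →
      raceProb (transEA w) (OptPos (n := n)) (EventIIIEA w) s ≥
        (1 - 1 / (n : ℝ)) * Real.exp (-(1 - b) * eu - 1) ∧
      ENNReal.ofReal (((w : ℝ) / ((1 - b) * eu)) ^ w) ≤
        expHitTime (transEA w) (OptPos (n := n)) s) :=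
  stmt17_general n b hb w hw s h1 h2 hones
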